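/- arXiv:2002.11211 — 6 statements merged into one kernel-verified Lean document; each statement's English description precedes it below -/
import Mathlib

section
/- For every u ∈ [0,1] with φ(u) > 0, the (censored) hours variable H satisfies μ{ω' : H(ω') ≤ φ(u)} = ENNReal.ofReal u. Consequently, for every ω with U(ω) ∈ [0,1] and H(ω) > 0, the value of the distribution function of H evaluated at H(ω) equals U(ω), i.e. μ{ω' : H(ω') ≤ H(ω)} = ENNReal.ofReal (U(ω)). (This is the key step in the proof of the paper's Lemma 1: the control function V = F_H(H) coincides with the latent uniform variable U on the event {H > 0}.) -/
open MeasureTheory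

/-- Key step in the proof of Lemma 1: with covariates fixed, `H = max (φ ∘ U) 0`,
`U` uniform on `[0,1]`, `φ` strictly increasing, the distribution function of `H`
evaluated at `φ u` equals `u` whenever `φ u > 0`; consequently `F_H (H ω) = U ω`
on the event `{H > 0}`. -/
theorem control_function_eq_uniform
    {Ω : Type*} [MeasurableSpace Ω] (μ : Measure Ω) [IsProbabilityMeasure μ]
    (U : Ω → ℝ) (hU : Measurable U)
    (hUnif : μ.map U = volume.restrict (Set.Icc (0 : ℝ) 1))
    (φ : ℝ → ℝ) (hφ : StrictMono φ)
    (H : Ω → ℝ) (hH : H = fun ω => max (φ (U ω)) 0) :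
    (∀ u ∈ Set.Icc (0 : ℝ) 1, 0 < φ u →
      μ {ω' | H ω' ≤ φ u} = ENNReal.ofReal u) ∧
    (∀ ω, U ω ∈ Set.Icc (0 : ℝ) 1 → 0 < H ω →
      μ {ω' | H ω' ≤ H ω} = ENNReal.ofReal (U ω)) := by
  have key : ∀ u ∈ Set.Icc (0:ℝ) 1, 0 < φ u → μ {ω' | H ω' ≤ φ u} = ENNReal.ofReal u := by
    intro u hu hpos
    have hset : {ω' | H ω' ≤ φ u} = U ⁻¹' Set.Iic u := by
      ext ω'
      simp only [hH, Set.mem_setOf_eq, Set.mem_preimage, Set.mem_Iic, max_le_iff]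
      constructor
      · rintro ⟨h1, _⟩; exact hφ.le_iff_le.mp h1
      · intro h; exact ⟨hφ.monotone h, hpos.le⟩
    have hinter : Set.Iic u ∩ Set.Icc 0 1 = Set.Icc 0 u := by
      ext x
      simp only [Set.mem_inter_iff, Set.mem_Iic, Set.mem_Icc]
      exact ⟨fun ⟨h1, h2, _⟩ => ⟨h2, h1⟩, fun ⟨h1, h2⟩ => ⟨h2, h1, h2.trans hu.2⟩⟩
    rw [hset, ← Measure.map_apply hU measurableSet_Iic, hUnif,
      Measure.restrict_apply measurableSet_Iic, hinter, Real.volume_Icc, sub_zero]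
  refine ⟨key, fun ω hω hpos => ?_⟩
  have hφpos : 0 < φ (U ω) := by
    by_contra h
    push_neg at h
    rw [hH] at hpos
    simp [max_eq_right h] at hpos
  have hHω : H ω = φ (U ω) := by rw [hH]; exact max_eq_left hφpos.le
  rw [hHω]
  exact key (U ω) hω hφpos
end

section
/- For μ-almost every ω with H(ω) > 0, the regular conditional distribution of H given (X,Z), evaluated at the point (X(ω), Z(ω)) and at the set Iic(H(ω)), equals U(ω); formally, condDistrib H ⟨X,Z⟩ μ (X ω, Z ω) (Set.Iic (H ω)) = ENNReal.ofReal (U ω) for μ-a.e. ω ∈ {H > 0}. (That is, the control function V := F_{H|X,Z}(H | X,Z) is μ-a.s. equal to U on the event {H > 0}.) -/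
/-!
Conditioning on `(X, Z) = p` freezes the covariates: by independence, the conditional law of `H`
given `(X, Z) = p` is the law of `max (k p u) 0` for `u` uniform on `[0, 1]`. When `H > 0`,
strict monotonicity of `k p` turns the event `max (k p u) 0 ≤ H` into `u ≤ U`, which has
probability `U`.
-/

open MeasureTheory ProbabilityTheory

namespace ProbabilityTheory

variable {Ω α β γ : Type*} [MeasurableSpace Ω] [MeasurableSpace α] [MeasurableSpace β]
  [MeasurableSpace γ] {μ : Measure Ω} {W : Ω → α} {U : Ω → β} {g : α × β → γ}

lemma Kernel.map_id_prod_const_apply (ν : Measure β) [IsFiniteMeasure ν] (hg : Measurable g)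
    (a : α) : (Kernel.id ×ₖ Kernel.const α ν).map g a = ν.map (fun b => g (a, b)) := by
  rw [Kernel.map_apply _ hg, Kernel.prod_apply, Kernel.id_apply, Kernel.const_apply,
    Measure.dirac_prod, Measure.map_map hg measurable_prodMk_left]
  rfl

lemma IndepFun.map_prod_map_eq_compProd [IsFiniteMeasure μ] (hW : Measurable W)
    (hU : Measurable U) (hg : Measurable g) (hWU : IndepFun W U μ) :
    μ.map (fun ω => (W ω, g (W ω, U ω)))
      = μ.map W ⊗ₘ (Kernel.id ×ₖ Kernel.const α (μ.map U)).map g := by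
  have hF : Measurable fun q : α × β => (q.1, g q) := measurable_fst.prodMk hg
  have hmap : μ.map (fun ω => (W ω, g (W ω, U ω)))
      = ((μ.map W).prod (μ.map U)).map (fun q => (q.1, g q)) := by
    rw [← (indepFun_iff_map_prod_eq_prod_map_map hW.aemeasurable hU.aemeasurable).mp hWU,
      Measure.map_map hF (hW.prodMk hU)]
    rfl
  ext s hs
  rw [hmap, Measure.map_apply hF hs, Measure.prod_apply (hF hs), Measure.compProd_apply hs]
  refine lintegral_congr fun a => ?_
  rw [Kernel.map_id_prod_const_apply _ hg,
    Measure.map_apply (by fun_prop) (measurable_prodMk_left hs)]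
  rfl

lemma IndepFun.condDistrib_apply_ae_eq_map [StandardBorelSpace γ] [Nonempty γ]
    [IsFiniteMeasure μ] (hW : Measurable W) (hU : Measurable U) (hg : Measurable g)
    (hWU : IndepFun W U μ) :
    ∀ᵐ ω ∂μ, condDistrib (fun ω => g (W ω, U ω)) W μ (W ω)
      = (μ.map U).map (fun b => g (W ω, b)) := by
  have h := condDistrib_ae_eq_of_measure_eq_compProd_of_measurable hW
    (by fun_prop) (hWU.map_prod_map_eq_compProd hW hU hg)
  filter_upwards [ae_of_ae_map hW.aemeasurable h] with ω hω
  rw [hω, Kernel.map_id_prod_const_apply _ hg]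

end ProbabilityTheory

lemma preimage_max_zero_Iic_of_strictMono {f : ℝ → ℝ} (hf : StrictMono f) {u : ℝ}
    (hu : 0 ≤ f u) : (fun v => max (f v) 0) ⁻¹' Set.Iic (f u) = Set.Iic u := by
  ext v
  simp [hu, hf.le_iff_le]

lemma volume_restrict_Icc_zero_one_Iic {u : ℝ} (hu : u ≤ 1) :
    volume.restrict (Set.Icc (0 : ℝ) 1) (Set.Iic u) = ENNReal.ofReal u := by
  have h : Set.Iic u ∩ Set.Icc 0 1 = Set.Icc 0 u := by
    ext v
    simp only [Set.mem_inter_iff, Set.mem_Iic, Set.mem_Icc]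
    grind
  rw [Measure.restrict_apply measurableSet_Iic, h, Real.volume_Icc, sub_zero]

theorem condDistrib_hours_eq_uniform_general
    {Ω : Type*} [MeasurableSpace Ω]
    (μ : Measure Ω) [IsProbabilityMeasure μ]
    {dx dz : ℕ}
    (X : Ω → (Fin dx → ℝ)) (Z : Ω → (Fin dz → ℝ)) (U : Ω → ℝ)
    (hX : Measurable X) (hZ : Measurable Z) (hU : Measurable U)
    (hindep : IndepFun (fun ω => (X ω, Z ω)) U μ)
    (hUnif : μ.map U = volume.restrict (Set.Icc (0 : ℝ) 1))
    (k : (Fin dx → ℝ) → (Fin dz → ℝ) → ℝ → ℝ)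
    (hk : Measurable fun p : (Fin dx → ℝ) × (Fin dz → ℝ) × ℝ => k p.1 p.2.1 p.2.2)
    (hkmono : ∀ x z, StrictMono (k x z))
    (H : Ω → ℝ) (hH : H = fun ω => max (k (X ω) (Z ω) (U ω)) 0) :
    ∀ᵐ ω ∂μ, 0 < H ω →
      condDistrib H (fun ω => (X ω, Z ω)) μ (X ω, Z ω) (Set.Iic (H ω))
        = ENNReal.ofReal (U ω) := by
  subst hH
  have hg : Measurable fun q : ((Fin dx → ℝ) × (Fin dz → ℝ)) × ℝ =>
      max (k q.1.1 q.1.2 q.2) 0 := by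
    fun_prop
  have hU_le_one : ∀ᵐ u ∂μ.map U, u ≤ 1 := by
    rw [hUnif]
    filter_upwards [ae_restrict_mem measurableSet_Icc] with u hu using hu.2
  filter_upwards [hindep.condDistrib_apply_ae_eq_map (hX.prodMk hZ) hU hg,
    ae_of_ae_map hU.aemeasurable hU_le_one] with ω hω hω_le_one hpos
  have hk_nonneg : 0 ≤ k (X ω) (Z ω) (U ω) := le_of_lt (by simpa using hpos)
  rw [hω, hUnif, Measure.map_apply (by fun_prop) measurableSet_Iic, max_eq_left hk_nonneg,
    preimage_max_zero_Iic_of_strictMono (hkmono _ _) hk_nonneg,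
    volume_restrict_Icc_zero_one_Iic hω_le_one]

/-- The control function `V := F_{H|X,Z}(H | X,Z)` is μ-a.s. equal to the latent
uniform variable `U` on the event `{H > 0}`. -/
theorem condDistrib_hours_eq_uniform
    {Ω : Type*} [MeasurableSpace Ω] [StandardBorelSpace Ω]
    (μ : Measure Ω) [IsProbabilityMeasure μ]
    {dx dz : ℕ}
    (X : Ω → (Fin dx → ℝ)) (Z : Ω → (Fin dz → ℝ)) (U : Ω → ℝ)
    (hX : Measurable X) (hZ : Measurable Z) (hU : Measurable U)
    (hindep : IndepFun (fun ω => (X ω, Z ω)) U μ)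
    (hUnif : μ.map U = volume.restrict (Set.Icc (0 : ℝ) 1))
    (k : (Fin dx → ℝ) → (Fin dz → ℝ) → ℝ → ℝ)
    (hk : Measurable fun p : (Fin dx → ℝ) × (Fin dz → ℝ) × ℝ => k p.1 p.2.1 p.2.2)
    (hkmono : ∀ x z, StrictMono (k x z))
    (H : Ω → ℝ) (hH : H = fun ω => max (k (X ω) (Z ω) (U ω)) 0) :
    ∀ᵐ ω ∂μ, 0 < H ω →
      condDistrib H (fun ω => (X ω, Z ω)) μ (X ω, Z ω) (Set.Iic (H ω))
        = ENNReal.ofReal (U ω) :=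
  condDistrib_hours_eq_uniform_general μ X Z U hX hZ hU hindep hUnif k hk hkmono H hH
end

section
/- (Lemma 1, control function.) Under the conditioned measure μ' (the subpopulation of workers, H > 0), the unobservable E is conditionally independent of the covariates (X,Z) given U: CondIndepFun holds under μ' for E and ⟨X,Z⟩ with respect to the σ-algebra generated by U. (Since the control function V := F_{H|X,Z}(H|X,Z) equals U a.s. on {H>0}, this states that V is a control function for E conditional on H > 0.) -/
/-!
Write `Y = (X, Z)`, `K = {(y, u) | 0 < k y u}` and `S = {(Y, U) ∈ K} = {H > 0}`, and let `ν` be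
the law of `Y` and `K_u = {y | (y, u) ∈ K}`. As `Y` is independent of `(E, U)`, Fubini gives, for
every event `{(E, U) ∈ C}`,
  `μ (S ∩ {Y ∈ B} ∩ {(E, U) ∈ C}) = ∫_{(E, U) ∈ C} ν (B ∩ K_U) dμ`
  `                               = ∫_{S ∩ {(E, U) ∈ C}} ν[B | K_U] dμ`.
So under `μ[|S]` the conditional probability of `{Y ∈ B}` given `(E, U)` is `ν[B | K_U]`, a function
of `U` alone; knowing `E` on top of `U` says nothing more about `Y`, which is the conditional
independence of `E` and `Y` given `U`.
-/

open MeasureTheory ProbabilityTheory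
open scoped ENNReal

namespace ProbabilityTheory

section

variable {Ω P Q : Type*} [MeasurableSpace Ω] [MeasurableSpace P] [MeasurableSpace Q]
  {μ : Measure Ω} [IsFiniteMeasure μ] {Y : Ω → P} {V : Ω → Q}

theorem IndepFun.lintegral_comp_prodMk (h : IndepFun Y V μ) (hY : Measurable Y)
    (hV : Measurable V) {G : P × Q → ℝ≥0∞} (hG : Measurable G) :
    ∫⁻ ω, G (Y ω, V ω) ∂μ = ∫⁻ ω, ∫⁻ y, G (y, V ω) ∂μ.map Y ∂μ := by
  rw [← lintegral_map hG (hY.prodMk hV),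
    (indepFun_iff_map_prod_eq_prod_map_map hY.aemeasurable hV.aemeasurable).1 h,
    lintegral_prod_symm' G hG, lintegral_map hG.lintegral_prod_left' hV]

theorem IndepFun.setLIntegral_comp_prodMk (h : IndepFun Y V μ) (hY : Measurable Y)
    (hV : Measurable V) {G : P × Q → ℝ≥0∞} (hG : Measurable G) {C : Set Q}
    (hC : MeasurableSet C) :
    ∫⁻ ω in V ⁻¹' C, G (Y ω, V ω) ∂μ = ∫⁻ ω in V ⁻¹' C, ∫⁻ y, G (y, V ω) ∂μ.map Y ∂μ := by
  rw [← lintegral_indicator (hV hC), ← lintegral_indicator (hV hC)]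
  refine (h.lintegral_comp_prodMk hY hV (hG.indicator (measurable_snd hC))).trans ?_
  congr with ω
  by_cases hω : V ω ∈ C <;> simp [hω]

end

theorem setLIntegral_cond {Ω : Type*} [MeasurableSpace Ω] {μ : Measure Ω} {S s : Set Ω}
    (hS : MeasurableSet S) (F : Ω → ℝ≥0∞) :
    ∫⁻ ω in s, F ω ∂μ[|S] = (μ S)⁻¹ * ∫⁻ ω in s, S.indicator F ω ∂μ := by
  rw [cond, Measure.restrict_smul, lintegral_smul_measure, setLIntegral_indicator hS,
    Measure.restrict_restrict' hS, smul_eq_mul, Set.inter_comm s S]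

theorem condIndepFun_of_aestronglyMeasurable_condExp {Ω P R : Type*}
    [MeasurableSpace P] [MeasurableSpace R] {m m' mΩ : MeasurableSpace Ω} [StandardBorelSpace Ω]
    {μ : Measure Ω} [IsFiniteMeasure μ] (hmm' : m ≤ m') (hm' : m' ≤ mΩ) {W : Ω → R} {Y : Ω → P}
    (hW : Measurable[m'] W) (hY : Measurable Y)
    (h : ∀ B, MeasurableSet B → AEStronglyMeasurable[m] (μ⟦Y ⁻¹' B | m'⟧) μ) :
    CondIndepFun m (hmm'.trans hm') W Y μ := by
  rw [condIndepFun_iff_condExp_inter_preimage_eq_mul (hW.mono hm' le_rfl) hY]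
  intro A B hA hB
  obtain ⟨g, hg, hBg⟩ := h B hB
  set fA := (W ⁻¹' A).indicator fun _ => (1 : ℝ)
  set fB := (Y ⁻¹' B).indicator fun _ => (1 : ℝ)
  have hg_int : Integrable g μ := integrable_condExp.congr hBg
  have hfA : StronglyMeasurable[m'] fA := stronglyMeasurable_const.indicator (hW hA)
  have hfA_int : Integrable fA μ := (integrable_const 1).indicator (hW.mono hm' le_rfl hA)
  have hfB_int : Integrable fB μ := (integrable_const 1).indicator (hY hB)
  have hfA_mul_int {f : Ω → ℝ} (hf : Integrable f μ) : Integrable (fA * f) μ := by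
    refine hf.bdd_mul (hfA.mono hm').aestronglyMeasurable (c := 1) (.of_forall fun ω => ?_)
    by_cases hω : ω ∈ W ⁻¹' A <;> simp [fA, hω]
  have hcondB : μ[fB | m] =ᵐ[μ] g :=
    (condExp_condExp_of_le hmm' hm').symm.trans <| (condExp_congr_ae hBg).trans <|
      condExp_of_aestronglyMeasurable' (hmm'.trans hm') hg.aestronglyMeasurable hg_int
  have hcondAB : μ[fA * fB | m] =ᵐ[μ] μ[fA | m] * g := calc
    μ[fA * fB | m] =ᵐ[μ] μ[μ[fA * fB | m'] | m] := (condExp_condExp_of_le hmm' hm').symm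
    _ =ᵐ[μ] μ[fA * g | m] := condExp_congr_ae <|
      (condExp_mul_of_stronglyMeasurable_left hfA (hfA_mul_int hfB_int) hfB_int).trans
        hBg.mul_left
    _ =ᵐ[μ] μ[fA | m] * g :=
      condExp_mul_of_stronglyMeasurable_right hg (hfA_mul_int hg_int) hfA_int
  have hfAB : (W ⁻¹' A ∩ Y ⁻¹' B).indicator (fun _ => (1 : ℝ)) = fA * fB :=
    Set.inter_indicator_one
  rw [hfAB]
  filter_upwards [hcondAB, hcondB] with ω hAB hB
  rw [hAB, hB]
  rfl

/-- When `ν` is the law of `Y` and `Y` is independent of `U`, this is the law of `Y` given `U = t`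
on the event `{(Y, U) ∈ K}`. -/
noncomputable def condSection {P T : Type*} [MeasurableSpace P] (ν : Measure P)
    (K : Set (P × T)) (t : T) : Measure P :=
  ν[|(fun y => (y, t)) ⁻¹' K]

instance {P T : Type*} [MeasurableSpace P] {ν : Measure P} {K : Set (P × T)} {t : T} :
    IsZeroOrProbabilityMeasure (condSection ν K t) := by
  unfold condSection
  infer_instance

theorem measurable_condSection_apply {P T : Type*} [MeasurableSpace P] [MeasurableSpace T]
    {ν : Measure P} [SFinite ν] {K : Set (P × T)} (hK : MeasurableSet K) {B : Set P}
    (hB : MeasurableSet B) : Measurable fun t => condSection ν K t B := by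
  simp only [condSection, cond_apply (measurable_prodMk_right hK), ← Measure.restrict_apply' hB]
  exact (measurable_measure_prodMk_right hK).inv.mul (measurable_measure_prodMk_right hK)

section Selection

variable {Ω P R T : Type*} [MeasurableSpace Ω] [MeasurableSpace P] [MeasurableSpace R]
  [MeasurableSpace T] {μ : Measure Ω} [IsFiniteMeasure μ] {Y : Ω → P} {W : Ω → R} {U : Ω → T}
  {K : Set (P × T)}

theorem IndepFun.setLIntegral_indicator_comp_prodMk
    (hYV : IndepFun Y (fun ω => (W ω, U ω)) μ) (hY : Measurable Y) (hW : Measurable W)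
    (hU : Measurable U) (hK : MeasurableSet K) {f : P × T → ℝ≥0∞} (hf : Measurable f)
    {C : Set (R × T)} (hC : MeasurableSet C) :
    ∫⁻ ω in (fun ω => (W ω, U ω)) ⁻¹' C, K.indicator f (Y ω, U ω) ∂μ
      = ∫⁻ ω in (fun ω => (W ω, U ω)) ⁻¹' C,
          ∫⁻ y in (fun y => (y, U ω)) ⁻¹' K, f (y, U ω) ∂μ.map Y ∂μ := by
  have hG : Measurable fun z : P × R × T => K.indicator f (z.1, z.2.2) :=
    (hf.indicator hK).comp (by fun_prop)
  rw [hYV.setLIntegral_comp_prodMk hY (hW.prodMk hU) hG hC]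
  simp_rw [← lintegral_indicator (measurable_prodMk_right hK)]
  rfl

theorem condExp_cond_indicator_preimage_ae_eq_condSection
    (hYV : IndepFun Y (fun ω => (W ω, U ω)) μ) (hY : Measurable Y) (hW : Measurable W)
    (hU : Measurable U) (hK : MeasurableSet K) {B : Set P} (hB : MeasurableSet B) :
    (μ[|{ω | (Y ω, U ω) ∈ K}])⟦Y ⁻¹' B | MeasurableSpace.comap (fun ω => (W ω, U ω)) inferInstance⟧
      =ᵐ[μ[|{ω | (Y ω, U ω) ∈ K}]] fun ω => (condSection (μ.map Y) K (U ω) B).toReal := by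
  set S := {ω | (Y ω, U ω) ∈ K}
  set g := fun t => condSection (μ.map Y) K t B
  have hS : MeasurableSet S := (hY.prodMk hU) hK
  have hg : Measurable g := measurable_condSection_apply hK hB
  have hg_le (t : T) : g t ≤ 1 := prob_le_one
  have hgU_int : Integrable (fun ω => (g (U ω)).toReal) (μ[|S]) := by
    refine .of_bound (hg.comp hU).ennreal_toReal.aestronglyMeasurable 1 (.of_forall fun ω => ?_)
    rw [Real.norm_of_nonneg ENNReal.toReal_nonneg]
    exact ENNReal.toReal_le_of_le_ofReal zero_le_one (by simpa using hg_le (U ω))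
  refine (ae_eq_condExp_of_forall_setIntegral_eq (hW.prodMk hU).comap_le
    ((integrable_const 1).indicator (hY hB)) (fun s _ _ => hgU_int.integrableOn) ?_
    (hg.comp (measurable_snd.comp (comap_measurable fun ω => (W ω, U ω)))).ennreal_toReal.aestronglyMeasurable).symm
  rintro - ⟨C, hC, rfl⟩ -
  rw [integral_toReal (f := fun ω => g (U ω)) (hg.comp hU).aemeasurable
      (.of_forall fun ω => (hg_le (U ω)).trans_lt ENNReal.one_lt_top),
    integral_indicator_const _ (hY hB), smul_eq_mul, mul_one, Measure.real,
    ← lintegral_indicator_one (hY hB), setLIntegral_cond hS, setLIntegral_cond hS]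
  congr 2
  refine (hYV.setLIntegral_indicator_comp_prodMk hY hW hU hK (hg.comp measurable_snd) hC).trans
    (Eq.trans ?_ (hYV.setLIntegral_indicator_comp_prodMk hY hW hU hK
      ((measurable_one.indicator hB).comp measurable_fst) hC).symm)
  congr with ω
  simp only [Function.comp_apply]
  rw [setLIntegral_const, lintegral_indicator_one hB, Measure.restrict_apply hB, Set.inter_comm]
  exact cond_mul_eq_inter (measurable_prodMk_right hK) B _

theorem condIndepFun_cond_of_indepFun [StandardBorelSpace Ω]
    (hYV : IndepFun Y (fun ω => (W ω, U ω)) μ) (hY : Measurable Y) (hW : Measurable W)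
    (hU : Measurable U) (hK : MeasurableSet K) :
    CondIndepFun (MeasurableSpace.comap U inferInstance) hU.comap_le W Y
      (μ[|{ω | (Y ω, U ω) ∈ K}]) := by
  have hV : Measurable[MeasurableSpace.comap (fun ω => (W ω, U ω)) inferInstance]
      fun ω => (W ω, U ω) :=
    comap_measurable _
  refine condIndepFun_of_aestronglyMeasurable_condExp (measurable_snd.comp hV).comap_le
    (hW.prodMk hU).comap_le (measurable_fst.comp hV) hY fun B hB => ?_
  exact ((measurable_condSection_apply hK hB).comp (comap_measurable U)).ennreal_toReal
    |>.aestronglyMeasurable.congr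
      (condExp_cond_indicator_preimage_ae_eq_condSection hYV hY hW hU hK hB).symm

end Selection

end ProbabilityTheory

theorem control_function_lemma_general
    {Ω : Type*} [MeasurableSpace Ω] [StandardBorelSpace Ω]
    (μ : Measure Ω) [IsProbabilityMeasure μ]
    {dx dz de : ℕ}
    (X : Ω → (Fin dx → ℝ)) (Z : Ω → (Fin dz → ℝ)) (E : Ω → (Fin de → ℝ)) (U : Ω → ℝ)
    (hX : Measurable X) (hZ : Measurable Z) (hE : Measurable E) (hU : Measurable U)
    (hindep : IndepFun (fun ω => (X ω, Z ω)) (fun ω => (E ω, U ω)) μ)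
    (k : (Fin dx → ℝ) → (Fin dz → ℝ) → ℝ → ℝ)
    (hk : Measurable fun p : (Fin dx → ℝ) × (Fin dz → ℝ) × ℝ => k p.1 p.2.1 p.2.2)
    (H : Ω → ℝ) (hH : H = fun ω => max (k (X ω) (Z ω) (U ω)) 0) :
    CondIndepFun (MeasurableSpace.comap U inferInstance) hU.comap_le
      E (fun ω => (X ω, Z ω)) (μ[|{ω | 0 < H ω}]) := by
  set K : Set (((Fin dx → ℝ) × (Fin dz → ℝ)) × ℝ) := {r | 0 < k r.1.1 r.1.2 r.2}
  have hK : MeasurableSet K :=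
    measurableSet_lt measurable_const (hk.comp (f := fun r : ((Fin dx → ℝ) × (Fin dz → ℝ)) × ℝ =>
      (r.1.1, r.1.2, r.2)) (by fun_prop))
  have hS : {ω | 0 < H ω} = {ω | ((X ω, Z ω), U ω) ∈ K} := by
    subst hH
    ext ω
    simp [K]
  rw [hS]
  exact condIndepFun_cond_of_indepFun hindep (hX.prodMk hZ) hE hU hK

/-- Lemma 1 (control function): in the subpopulation of workers (`H > 0`), the
unobservable `E` is conditionally independent of the covariates `(X,Z)` given `U`
(equivalently, given the control function `V = F_{H|X,Z}(H|X,Z)`, which equals `U`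
a.s. on `{H > 0}`). -/
theorem control_function_lemma
    {Ω : Type*} [MeasurableSpace Ω] [StandardBorelSpace Ω] [Nonempty Ω]
    (μ : Measure Ω) [IsProbabilityMeasure μ]
    {dx dz de : ℕ}
    (X : Ω → (Fin dx → ℝ)) (Z : Ω → (Fin dz → ℝ)) (E : Ω → (Fin de → ℝ)) (U : Ω → ℝ)
    (hX : Measurable X) (hZ : Measurable Z) (hE : Measurable E) (hU : Measurable U)
    (hindep : IndepFun (fun ω => (X ω, Z ω)) (fun ω => (E ω, U ω)) μ)
    (hUnif : μ.map U = volume.restrict (Set.Icc (0 : ℝ) 1))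
    (k : (Fin dx → ℝ) → (Fin dz → ℝ) → ℝ → ℝ)
    (hk : Measurable fun p : (Fin dx → ℝ) × (Fin dz → ℝ) × ℝ => k p.1 p.2.1 p.2.2)
    (hkmono : ∀ x z, StrictMono (k x z))
    (H : Ω → ℝ) (hH : H = fun ω => max (k (X ω) (Z ω) (U ω)) 0)
    (hpos : μ {ω | 0 < H ω} ≠ 0) :
    CondIndepFun (MeasurableSpace.comap U inferInstance) hU.comap_le
      E (fun ω => (X ω, Z ω)) (μ[|{ω | 0 < H ω}]) :=
  control_function_lemma_general μ X Z E U hX hZ hE hU hindep k hk H hH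
end

section
/- For μ'-almost every ω, the regular conditional distribution of E given the triple (X,Z,U) computed under the worker subpopulation measure μ' coincides with the regular conditional distribution of E given U computed under the full-population measure μ: condDistrib E ⟨X,Z,U⟩ μ' (X ω, Z ω, U ω) = condDistrib E U μ (U ω) as measures on ℝ^{de}. (This is the claim in the proof of Lemma 1 that the distribution of E conditional on X, Z, V and the event H > 0 is identical to the distribution of E conditional on U.) -/
/-!
Since `(X, Z)` is independent of `(U, E)`, the conditional law of `E` given `(X, Z, U)` is its
conditional law given `U` alone. The event `{H > 0}` is determined by `(X, Z, U)`, and conditioning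
on such an event leaves the conditional law given `(X, Z, U)` unchanged.
-/

open MeasureTheory ProbabilityTheory

namespace ProbabilityTheory

variable {Ω 𝓦 𝓧 𝓨 : Type*} {mΩ : MeasurableSpace Ω} {m𝓦 : MeasurableSpace 𝓦}
  {m𝓧 : MeasurableSpace 𝓧} {m𝓨 : MeasurableSpace 𝓨}

lemma Kernel.const_compProd (μ : Measure 𝓧) [SFinite μ] (κ : Kernel 𝓧 𝓨) [IsSFiniteKernel κ] :
    Kernel.const 𝓦 (μ ⊗ₘ κ) = Kernel.const 𝓦 μ ⊗ₖ κ.prodMkLeft 𝓦 := by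
  ext w s hs
  rw [Kernel.const_apply, Measure.compProd_apply hs, Kernel.compProd_apply hs]
  rfl

lemma _root_.MeasureTheory.Measure.compProd_restrict_left (μ : Measure 𝓧) [SFinite μ]
    (κ : Kernel 𝓧 𝓨) [IsSFiniteKernel κ] {s : Set 𝓧} (hs : MeasurableSet s) :
    μ.restrict s ⊗ₘ κ = (μ ⊗ₘ κ).restrict (s ×ˢ Set.univ) := by
  have hconst : Kernel.const Unit (μ.restrict s) = (Kernel.const Unit μ).restrict hs := by
    ext
    simp [Kernel.restrict_apply]
  rw [Measure.compProd, Measure.compProd, hconst, Kernel.compProd_restrict_left,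
    Kernel.restrict_apply]

variable {P : Measure Ω} {X : Ω → 𝓧} {Y : Ω → 𝓨} {κ : Kernel 𝓧 𝓨}

lemma hasCondDistrib_condDistrib [StandardBorelSpace 𝓨] [Nonempty 𝓨] [IsFiniteMeasure P]
    (hX : AEMeasurable X P) (hY : AEMeasurable Y P) :
    HasCondDistrib Y X (condDistrib Y X P) P :=
  ⟨hX.prodMk hY, (compProd_map_condDistrib hY).symm⟩

lemma HasCondDistrib.condDistrib_ae_eq [StandardBorelSpace 𝓨] [Nonempty 𝓨] [IsFiniteMeasure P]
    [IsFiniteKernel κ] (h : HasCondDistrib Y X κ P) :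
    ∀ᵐ ω ∂P, condDistrib Y X P (X ω) = κ (X ω) :=
  ae_of_ae_map h.aemeasurable_fst
    (condDistrib_ae_eq_of_measure_eq_compProd X h.aemeasurable_snd h.map_eq)

lemma HasCondDistrib.cond [SFinite P] [IsSFiniteKernel κ] (h : HasCondDistrib Y X κ P)
    (hX : Measurable X) (hY : Measurable Y) {s : Set 𝓧} (hs : MeasurableSet s) :
    HasCondDistrib Y X κ P[|X ⁻¹' s] where
  aemeasurable := (hX.prodMk hY).aemeasurable
  map_eq := by
    rw [ProbabilityTheory.cond, Measure.map_smul, Measure.map_smul, Measure.compProd_smul_left,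
      ← Measure.restrict_map hX hs, Measure.compProd_restrict_left _ _ hs, ← h.map_eq,
      Measure.restrict_map (hX.prodMk hY) (hs.prod MeasurableSet.univ), Set.mk_preimage_prod,
      Set.preimage_univ, Set.inter_univ]

lemma HasCondDistrib.prodMk_of_indepFun [IsFiniteMeasure P] [IsMarkovKernel κ] {W : Ω → 𝓦}
    (h : HasCondDistrib Y X κ P) (hW : AEMeasurable W P)
    (hind : IndepFun W (fun ω ↦ (X ω, Y ω)) P) :
    HasCondDistrib Y (fun ω ↦ (W ω, X ω)) (κ.prodMkLeft 𝓦) P := by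
  refine HasCondDistrib.of_compProd (κ := Kernel.const 𝓦 (P.map X))
    ⟨hW.prodMk h.aemeasurable, ?_⟩
  rw [← Kernel.const_compProd, Measure.compProd_const, ← h.map_eq]
  exact (hind.hasLaw_prod ⟨hW, rfl⟩ ⟨h.aemeasurable, rfl⟩).map_eq

end ProbabilityTheory

theorem condDistrib_workers_eq_condDistrib_control_general
    {Ω : Type*} [MeasurableSpace Ω]
    (μ : Measure Ω) [IsProbabilityMeasure μ]
    {dx dz de : ℕ}
    (X : Ω → (Fin dx → ℝ)) (Z : Ω → (Fin dz → ℝ)) (E : Ω → (Fin de → ℝ)) (U : Ω → ℝ)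
    (hX : Measurable X) (hZ : Measurable Z) (hE : Measurable E) (hU : Measurable U)
    (hindep : IndepFun (fun ω => (X ω, Z ω)) (fun ω => (E ω, U ω)) μ)
    (k : (Fin dx → ℝ) → (Fin dz → ℝ) → ℝ → ℝ)
    (hk : Measurable fun p : (Fin dx → ℝ) × (Fin dz → ℝ) × ℝ => k p.1 p.2.1 p.2.2)
    (H : Ω → ℝ) (hH : H = fun ω => max (k (X ω) (Z ω) (U ω)) 0) :
    ∀ᵐ ω ∂(μ[|{ω | 0 < H ω}]),
      condDistrib E (fun ω => (X ω, Z ω, U ω)) (μ[|{ω | 0 < H ω}]) (X ω, Z ω, U ω)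
        = condDistrib E U μ (U ω) := by
  have hT : Measurable fun ω => (X ω, Z ω, U ω) := hX.prodMk (hZ.prodMk hU)
  have hworkers :
      {ω | 0 < H ω} = (fun ω => (X ω, Z ω, U ω)) ⁻¹' {p | 0 < k p.1 p.2.1 p.2.2} := by
    ext ω
    simp [hH]
  have hXZU : HasCondDistrib E (fun ω => ((X ω, Z ω), U ω))
      ((condDistrib E U μ).prodMkLeft _) μ :=
    (hasCondDistrib_condDistrib hU.aemeasurable hE.aemeasurable).prodMk_of_indepFun
      (hX.prodMk hZ).aemeasurable (hindep.comp measurable_id measurable_swap)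
  have hcond := (hXZU.measurableEquiv_comp_right MeasurableEquiv.prodAssoc).cond hT hE
    (measurableSet_lt (f := fun _ => 0) measurable_const hk)
  rw [hworkers]
  -- the kernel of `hcond` sends `(x, z, u)` to `condDistrib E U μ u` definitionally
  exact hcond.condDistrib_ae_eq

/-- The distribution of `E` conditional on `(X,Z,U)` in the worker subpopulation
(`H > 0`) is identical to the distribution of `E` conditional on `U` alone in the
full population. -/
theorem condDistrib_workers_eq_condDistrib_control
    {Ω : Type*} [MeasurableSpace Ω] [StandardBorelSpace Ω] [Nonempty Ω]
    (μ : Measure Ω) [IsProbabilityMeasure μ]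
    {dx dz de : ℕ}
    (X : Ω → (Fin dx → ℝ)) (Z : Ω → (Fin dz → ℝ)) (E : Ω → (Fin de → ℝ)) (U : Ω → ℝ)
    (hX : Measurable X) (hZ : Measurable Z) (hE : Measurable E) (hU : Measurable U)
    (hindep : IndepFun (fun ω => (X ω, Z ω)) (fun ω => (E ω, U ω)) μ)
    (hUnif : μ.map U = volume.restrict (Set.Icc (0 : ℝ) 1))
    (k : (Fin dx → ℝ) → (Fin dz → ℝ) → ℝ → ℝ)
    (hk : Measurable fun p : (Fin dx → ℝ) × (Fin dz → ℝ) × ℝ => k p.1 p.2.1 p.2.2)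
    (hkmono : ∀ x z, StrictMono (k x z))
    (H : Ω → ℝ) (hH : H = fun ω => max (k (X ω) (Z ω) (U ω)) 0)
    (hpos : μ {ω | 0 < H ω} ≠ 0) :
    ∀ᵐ ω ∂(μ[|{ω | 0 < H ω}]),
      condDistrib E (fun ω => (X ω, Z ω, U ω)) (μ[|{ω | 0 < H ω}]) (X ω, Z ω, U ω)
        = condDistrib E U μ (U ω) :=
  condDistrib_workers_eq_condDistrib_control_general μ X Z E U hX hZ hE hU hindep k hk H hH
end

section
/- (Lemma 2, identification of the local average structural function.) Suppose in addition that W = g(X,E) is μ-integrable. Then μ'-almost surely, the conditional expectation of W given the σ-algebra generated by (X,Z,U) under the worker subpopulation measure μ' is given by the LASF evaluated at (X,U): μ'[W | σ(X,Z,U)](ω) = ∫ g(X ω, e) d(condDistrib E U μ (U ω))(e) for μ'-a.e. ω. In particular the LASF μ(x,v) = E[g(x,E) | U = v] is identified from the distribution of observables on {H>0}. -/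
/-!
Since `(X, Z)` is independent of `(U, E)`, the conditional law of `E` given `((X, Z), U)` is its
conditional law given `U` alone, so `E[g(X, E) | X, Z, U] = ∫ g(X, e) d(condDistrib E U μ (U))`.
The event `{H > 0}` lies in `σ(X, Z, U)`, and conditioning the measure on an event of the
conditioning σ-algebra leaves the conditional expectation unchanged on that event.
-/

open MeasureTheory ProbabilityTheory

namespace ProbabilityTheory

lemma Kernel.const_compProd_prodMkLeft {α β γ : Type*} [MeasurableSpace α] [MeasurableSpace β]
    [MeasurableSpace γ] (ν : Measure β) [SFinite ν] (κ : Kernel β γ) [IsSFiniteKernel κ] :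
    Kernel.const α ν ⊗ₖ κ.prodMkLeft α = Kernel.const α (ν ⊗ₘ κ) := by
  ext a s hs
  rw [Kernel.compProd_apply hs, Kernel.const_apply, Kernel.const_apply,
    Measure.compProd_apply hs]
  rfl

theorem condDistrib_prod_ae_eq_prodMkLeft_of_indepFun {Ω α β γ : Type*} [MeasurableSpace Ω]
    [MeasurableSpace α] [MeasurableSpace β] [MeasurableSpace γ] [StandardBorelSpace γ]
    [Nonempty γ] {μ : Measure Ω} [IsFiniteMeasure μ] {S : Ω → α} {V : Ω → β} {Y : Ω → γ}
    (hS : Measurable S) (hV : Measurable V) (hY : Measurable Y)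
    (h : IndepFun S (fun ω => (V ω, Y ω)) μ) :
    condDistrib Y (fun ω => (S ω, V ω)) μ =ᵐ[μ.map fun ω => (S ω, V ω)]
      (condDistrib Y V μ).prodMkLeft α := by
  refine condDistrib_ae_eq_of_measure_eq_compProd _ hY.aemeasurable ?_
  have hSV : μ.map (fun ω => (S ω, V ω)) = (μ.map S).prod (μ.map V) :=
    (indepFun_iff_map_prod_eq_prod_map_map hS.aemeasurable hV.aemeasurable).mp
      (h.comp measurable_id measurable_fst)
  calc μ.map (fun ω => ((S ω, V ω), Y ω))
      = (μ.map fun ω => (S ω, V ω, Y ω)).map MeasurableEquiv.prodAssoc.symm := by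
        rw [Measure.map_map (by fun_prop) (by fun_prop)]; rfl
    _ = ((μ.map S).prod (μ.map V ⊗ₘ condDistrib Y V μ)).map
          MeasurableEquiv.prodAssoc.symm := by
        rw [(indepFun_iff_map_prod_eq_prod_map_map hS.aemeasurable
          (hV.prodMk hY).aemeasurable).mp h, compProd_map_condDistrib hY.aemeasurable]
    _ = μ.map (fun ω => (S ω, V ω)) ⊗ₘ (condDistrib Y V μ).prodMkLeft α := by
        rw [hSV, ← Measure.compProd_const, ← Measure.compProd_const,
          ← Kernel.const_compProd_prodMkLeft, Measure.compProd_assoc]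

theorem condExp_cond_ae_eq_condExp {Ω F : Type*} {m m0 : MeasurableSpace Ω}
    [NormedAddCommGroup F] [NormedSpace ℝ F] [CompleteSpace F]
    {μ : Measure Ω} [IsFiniteMeasure μ] (hm : m ≤ m0) {s : Set Ω} (hs : MeasurableSet[m] s)
    {f : Ω → F} (hf : Integrable f μ) :
    (μ[|s])[f | m] =ᵐ[μ[|s]] μ[f | m] := by
  by_cases hμs : μ s = 0
  · simp [cond_eq_zero_of_meas_eq_zero hμs, Filter.EventuallyEq]
  have hint : ∀ {g : Ω → F}, Integrable g μ → Integrable g (μ[|s]) := fun hg =>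
    hg.restrict.smul_measure (ENNReal.inv_ne_top.mpr hμs)
  refine (ae_eq_condExp_of_forall_setIntegral_eq hm (hint hf)
    (fun t _ _ => (hint integrable_condExp).integrableOn) (fun t ht _ => ?_)
    stronglyMeasurable_condExp.aestronglyMeasurable).symm
  rw [ProbabilityTheory.cond, Measure.restrict_smul, integral_smul_measure, integral_smul_measure,
    Measure.restrict_restrict (hm _ ht), setIntegral_condExp hm hf (ht.inter hs)]

end ProbabilityTheory

theorem LASF_identification_general
    {Ω : Type*} [MeasurableSpace Ω]
    (μ : Measure Ω) [IsProbabilityMeasure μ]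
    {dx dz de : ℕ}
    (X : Ω → (Fin dx → ℝ)) (Z : Ω → (Fin dz → ℝ)) (E : Ω → (Fin de → ℝ)) (U : Ω → ℝ)
    (hX : Measurable X) (hZ : Measurable Z) (hE : Measurable E) (hU : Measurable U)
    (hindep : IndepFun (fun ω => (X ω, Z ω)) (fun ω => (E ω, U ω)) μ)
    (k : (Fin dx → ℝ) → (Fin dz → ℝ) → ℝ → ℝ)
    (hk : Measurable fun p : (Fin dx → ℝ) × (Fin dz → ℝ) × ℝ => k p.1 p.2.1 p.2.2)
    (H : Ω → ℝ) (hH : H = fun ω => max (k (X ω) (Z ω) (U ω)) 0)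
    (g : (Fin dx → ℝ) → (Fin de → ℝ) → ℝ)
    (hg : Measurable fun p : (Fin dx → ℝ) × (Fin de → ℝ) => g p.1 p.2)
    (W : Ω → ℝ) (hW : W = fun ω => g (X ω) (E ω))
    (hint : Integrable W μ) :
    (μ[|{ω | 0 < H ω}])[W |
        MeasurableSpace.comap (fun ω => (X ω, Z ω, U ω)) inferInstance]
      =ᵐ[μ[|{ω | 0 < H ω}]]
    fun ω => ∫ e, g (X ω) e ∂(condDistrib E U μ (U ω)) := by
  subst hH hW
  set P : Ω → ((Fin dx → ℝ) × (Fin dz → ℝ)) × ℝ := fun ω => ((X ω, Z ω), U ω)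
  have hP : Measurable P := (hX.prodMk hZ).prodMk hU
  have hσ : MeasurableSpace.comap (fun ω => (X ω, Z ω, U ω)) inferInstance =
      MeasurableSpace.comap P inferInstance := by
    rw [← MeasurableEquiv.prodAssoc.measurableEmbedding.comap_eq, MeasurableSpace.comap_comp]
    rfl
  have hworker : MeasurableSet[MeasurableSpace.comap P inferInstance]
      {ω | 0 < max (k (X ω) (Z ω) (U ω)) 0} :=
    ⟨_, measurableSet_lt measurable_const
      ((hk.comp MeasurableEquiv.prodAssoc.measurable).max measurable_const), rfl⟩
  have hcondExp := condExp_prod_ae_eq_integral_condDistrib hP hE.aemeasurable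
    (f := fun p : (((Fin dx → ℝ) × (Fin dz → ℝ)) × ℝ) × (Fin de → ℝ) => g p.1.1.1 p.2)
    (hg.comp (measurable_fst.fst.fst.prodMk measurable_snd)).stronglyMeasurable hint
  have hkernel := ae_of_ae_map hP.aemeasurable <|
    condDistrib_prod_ae_eq_prodMkLeft_of_indepFun (hX.prodMk hZ) hU hE
      (hindep.comp measurable_id measurable_swap)
  rw [hσ]
  filter_upwards [condExp_cond_ae_eq_condExp hP.comap_le hworker hint,
    cond_absolutelyContinuous.ae_le hcondExp, cond_absolutelyContinuous.ae_le hkernel]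
    with ω hrestrict hcondExp hkernel
  rw [hrestrict, hcondExp, hkernel]
  rfl

/-- Lemma 2 (identification of the LASF): if `W = g(X,E)` is μ-integrable, then in
the worker subpopulation (`H > 0`) the conditional expectation of `W` given
`σ(X,Z,U)` equals the local average structural function evaluated at `(X,U)`. -/
theorem LASF_identification
    {Ω : Type*} [MeasurableSpace Ω] [StandardBorelSpace Ω] [Nonempty Ω]
    (μ : Measure Ω) [IsProbabilityMeasure μ]
    {dx dz de : ℕ}
    (X : Ω → (Fin dx → ℝ)) (Z : Ω → (Fin dz → ℝ)) (E : Ω → (Fin de → ℝ)) (U : Ω → ℝ)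
    (hX : Measurable X) (hZ : Measurable Z) (hE : Measurable E) (hU : Measurable U)
    (hindep : IndepFun (fun ω => (X ω, Z ω)) (fun ω => (E ω, U ω)) μ)
    (hUnif : μ.map U = volume.restrict (Set.Icc (0 : ℝ) 1))
    (k : (Fin dx → ℝ) → (Fin dz → ℝ) → ℝ → ℝ)
    (hk : Measurable fun p : (Fin dx → ℝ) × (Fin dz → ℝ) × ℝ => k p.1 p.2.1 p.2.2)
    (hkmono : ∀ x z, StrictMono (k x z))
    (H : Ω → ℝ) (hH : H = fun ω => max (k (X ω) (Z ω) (U ω)) 0)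
    (hpos : μ {ω | 0 < H ω} ≠ 0)
    (g : (Fin dx → ℝ) → (Fin de → ℝ) → ℝ)
    (hg : Measurable fun p : (Fin dx → ℝ) × (Fin de → ℝ) => g p.1 p.2)
    (W : Ω → ℝ) (hW : W = fun ω => g (X ω) (E ω))
    (hint : Integrable W μ) :
    (μ[|{ω | 0 < H ω}])[W |
        MeasurableSpace.comap (fun ω => (X ω, Z ω, U ω)) inferInstance]
      =ᵐ[μ[|{ω | 0 < H ω}]]
    fun ω => ∫ e, g (X ω) e ∂(condDistrib E U μ (U ω)) :=
  LASF_identification_general μ X Z E U hX hZ hE hU hindep k hk H hH g hg W hW hint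
end

section
/- (Representation of the observed annual earnings distribution.) Define annual earnings Y := (indicator of {H > 0}) · W · H. Then for every y ≥ 0, μ{ω : Y ω ≤ y} = ∫ [ 1{k(x,z,v) > 0} · G(y / k(x,z,v), x, v) + 1{k(x,z,v) ≤ 0} ] d(Measure.map ⟨X,Z,U⟩ μ)(x,z,v), where the integral is a Lebesgue integral with respect to the joint law of (X,Z,U). That is, the observed earnings distribution is the integral of the LDSF evaluated at y divided by the hours function over the region of positive hours, plus the mass of the region of zero hours. -/
/-! Since `(X, Z)` is independent of `(U, E)`, conditioning `E` on `(X, Z, U)` is the same as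
conditioning on `U` alone, so the joint law of `((X, Z, U), E)` disintegrates as the law of
`(X, Z, U)` composed with `condDistrib E U μ`. For `y ≥ 0` the event `{Y ≤ y}` is
`{0 < k(X,Z,U) → g(X,E) · k(X,Z,U) ≤ y}`, whose slice at `(x, z, v)` has
`condDistrib E U μ v`-mass `G(y / k(x,z,v), x, v)` when `k(x,z,v) > 0` and `1` otherwise. -/

open MeasureTheory ProbabilityTheory

section

variable {Ω α β γ : Type*} [MeasurableSpace Ω] [MeasurableSpace α] [MeasurableSpace β]
  [MeasurableSpace γ]

lemma ProbabilityTheory.Kernel.const_compProd_prodMkLeft_s7 (ρ : Measure β) [SFinite ρ]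
    (κ : Kernel β γ) [IsSFiniteKernel κ] :
    Kernel.const α ρ ⊗ₖ Kernel.prodMkLeft α κ = Kernel.const α (ρ ⊗ₘ κ) := by
  ext a s hs
  rw [Kernel.compProd_apply hs, Kernel.const_apply, Kernel.const_apply, Measure.compProd_apply hs]
  rfl

lemma MeasureTheory.Measure.prod_compProd_prodMkLeft (ν : Measure α) (ρ : Measure β)
    [SFinite ν] [SFinite ρ] (κ : Kernel β γ) [IsSFiniteKernel κ] :
    ν.prod ρ ⊗ₘ Kernel.prodMkLeft α κ
      = (ν.prod (ρ ⊗ₘ κ)).map MeasurableEquiv.prodAssoc.symm := by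
  rw [← Measure.compProd_const, ← Measure.compProd_const, ← Kernel.const_compProd_prodMkLeft_s7,
    Measure.compProd_assoc]

theorem ProbabilityTheory.IndepFun.map_prodMk_eq_compProd_prodMkLeft_condDistrib
    [StandardBorelSpace γ] [Nonempty γ] {μ : Measure Ω} [IsFiniteMeasure μ]
    {A : Ω → α} {U : Ω → β} {E : Ω → γ}
    (hA : Measurable A) (hU : Measurable U) (hE : Measurable E)
    (hindep : IndepFun A (fun ω => (U ω, E ω)) μ) :
    μ.map (fun ω => ((A ω, U ω), E ω))
      = μ.map (fun ω => (A ω, U ω)) ⊗ₘ Kernel.prodMkLeft α (condDistrib E U μ) := by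
  have hAU : μ.map (fun ω => (A ω, U ω)) = (μ.map A).prod (μ.map U) :=
    (indepFun_iff_map_prod_eq_prod_map_map hA.aemeasurable hU.aemeasurable).mp
      (hindep.comp measurable_id measurable_fst)
  have hAUE :
      μ.map (fun ω => (A ω, U ω, E ω)) = (μ.map A).prod (μ.map fun ω => (U ω, E ω)) :=
    (indepFun_iff_map_prod_eq_prod_map_map hA.aemeasurable (hU.prodMk hE).aemeasurable).mp hindep
  rw [hAU, Measure.prod_compProd_prodMkLeft, compProd_map_condDistrib hE.aemeasurable, ← hAUE,
    Measure.map_map (by fun_prop) (by fun_prop)]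
  rfl

lemma MeasureTheory.measure_setOf_pos_imp_mul_le (ρ : Measure γ) [IsProbabilityMeasure ρ]
    {f : γ → ℝ} (hf : Measurable f) (c y : ℝ) :
    ρ {e | 0 < c → f e * c ≤ y} = if 0 < c then ρ.map f (Set.Iic (y / c)) else 1 := by
  split_ifs with hc
  · rw [Measure.map_apply hf measurableSet_Iic]
    congr 1
    ext e
    simp [hc, le_div_iff₀ hc]
  · simp [hc]

lemma measurableSet_setOf_pos_imp_mul_le {K G : α → ℝ} (hK : Measurable K) (hG : Measurable G)
    (y : ℝ) : MeasurableSet {q | 0 < K q → G q * K q ≤ y} :=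
  (measurableSet_lt measurable_const hK).imp (measurableSet_le (hG.mul hK) measurable_const)

end

lemma Set.indicator_pos_add_indicator_nonpos {δ M : Type*} [AddZeroClass M] [One M]
    (K : δ → ℝ) (F : δ → M) (p : δ) :
    {q | 0 < K q}.indicator F p + {q | K q ≤ 0}.indicator 1 p = if 0 < K p then F p else 1 := by
  by_cases hp : 0 < K p
  · simp [hp]
  · simp [hp, not_lt.mp hp]

lemma ite_pos_max_mul_le_iff {h w y : ℝ} (hy : 0 ≤ y) :
    (if 0 < max h 0 then w * max h 0 else 0) ≤ y ↔ (0 < h → w * h ≤ y) := by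
  by_cases hh : 0 < h
  · simp [hh, max_eq_left hh.le]
  · simp [hh, hy]

theorem earnings_distribution_representation_general
    {Ω : Type*} [MeasurableSpace Ω]
    (μ : Measure Ω) [IsProbabilityMeasure μ]
    {dx dz de : ℕ}
    (X : Ω → (Fin dx → ℝ)) (Z : Ω → (Fin dz → ℝ)) (E : Ω → (Fin de → ℝ)) (U : Ω → ℝ)
    (hX : Measurable X) (hZ : Measurable Z) (hE : Measurable E) (hU : Measurable U)
    (hindep : IndepFun (fun ω => (X ω, Z ω)) (fun ω => (E ω, U ω)) μ)
    (k : (Fin dx → ℝ) → (Fin dz → ℝ) → ℝ → ℝ)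
    (hk : Measurable fun p : (Fin dx → ℝ) × (Fin dz → ℝ) × ℝ => k p.1 p.2.1 p.2.2)
    (H : Ω → ℝ) (hH : H = fun ω => max (k (X ω) (Z ω) (U ω)) 0)
    (g : (Fin dx → ℝ) → (Fin de → ℝ) → ℝ)
    (hg : Measurable fun p : (Fin dx → ℝ) × (Fin de → ℝ) => g p.1 p.2)
    (W : Ω → ℝ) (hW : W = fun ω => g (X ω) (E ω))
    (Y : Ω → ℝ) (hY : Y = fun ω => if 0 < H ω then W ω * H ω else 0) :
    ∀ y : ℝ, 0 ≤ y →
      μ {ω | Y ω ≤ y} =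
        ∫⁻ p : (Fin dx → ℝ) × (Fin dz → ℝ) × ℝ,
          (Set.indicator {q : (Fin dx → ℝ) × (Fin dz → ℝ) × ℝ | 0 < k q.1 q.2.1 q.2.2}
              (fun q => (Measure.map (fun e => g q.1 e) (condDistrib E U μ q.2.2))
                (Set.Iic (y / k q.1 q.2.1 q.2.2))) p
            + Set.indicator {q : (Fin dx → ℝ) × (Fin dz → ℝ) × ℝ | k q.1 q.2.1 q.2.2 ≤ 0}
              1 p)
          ∂(μ.map fun ω => (X ω, Z ω, U ω)) := by
  intro y hy
  set S : Set ((((Fin dx → ℝ) × (Fin dz → ℝ)) × ℝ) × (Fin de → ℝ)) :=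
    {q | 0 < k q.1.1.1 q.1.1.2 q.1.2 → g q.1.1.1 q.2 * k q.1.1.1 q.1.1.2 q.1.2 ≤ y}
  have hS : MeasurableSet S := measurableSet_setOf_pos_imp_mul_le
    (hk.comp (MeasurableEquiv.prodAssoc.measurable.comp measurable_fst))
    (hg.comp (measurable_fst.fst.fst.prodMk measurable_snd)) y
  have hevent : {ω | Y ω ≤ y} = (fun ω => (((X ω, Z ω), U ω), E ω)) ⁻¹' S := by
    subst hY hW hH
    exact Set.ext fun ω => ite_pos_max_mul_le_iff hy
  have hlaw : μ.map (fun ω => (X ω, Z ω, U ω))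
      = (μ.map fun ω => ((X ω, Z ω), U ω)).map MeasurableEquiv.prodAssoc := by
    rw [Measure.map_map (by fun_prop) (by fun_prop)]
    rfl
  have hindep_swap : IndepFun (fun ω => (X ω, Z ω)) (fun ω => (U ω, E ω)) μ :=
    hindep.comp measurable_id measurable_swap
  rw [hlaw, lintegral_map_equiv, hevent, ← Measure.map_apply (by fun_prop) hS,
    hindep_swap.map_prodMk_eq_compProd_prodMkLeft_condDistrib (by fun_prop) hU hE,
    Measure.compProd_apply hS]
  refine lintegral_congr fun q => ?_
  rw [Kernel.prodMkLeft_apply, Set.indicator_pos_add_indicator_nonpos]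
  exact measure_setOf_pos_imp_mul_le (condDistrib E U μ q.2) (f := g q.1.1)
    (hg.comp measurable_prodMk_left) (k q.1.1 q.1.2 q.2) y

/-- Representation of the observed annual earnings distribution: the distribution
function of earnings `Y = 1{H>0}·W·H` at `y ≥ 0` is the integral, with respect to the
joint law of `(X,Z,U)`, of the LDSF evaluated at `y / k(x,z,v)` over the region of
positive hours, plus the mass of the region of nonpositive hours. -/
theorem earnings_distribution_representation
    {Ω : Type*} [MeasurableSpace Ω] [StandardBorelSpace Ω] [Nonempty Ω]
    (μ : Measure Ω) [IsProbabilityMeasure μ]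
    {dx dz de : ℕ}
    (X : Ω → (Fin dx → ℝ)) (Z : Ω → (Fin dz → ℝ)) (E : Ω → (Fin de → ℝ)) (U : Ω → ℝ)
    (hX : Measurable X) (hZ : Measurable Z) (hE : Measurable E) (hU : Measurable U)
    (hindep : IndepFun (fun ω => (X ω, Z ω)) (fun ω => (E ω, U ω)) μ)
    (hUnif : μ.map U = volume.restrict (Set.Icc (0 : ℝ) 1))
    (k : (Fin dx → ℝ) → (Fin dz → ℝ) → ℝ → ℝ)
    (hk : Measurable fun p : (Fin dx → ℝ) × (Fin dz → ℝ) × ℝ => k p.1 p.2.1 p.2.2)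
    (hkmono : ∀ x z, StrictMono (k x z))
    (H : Ω → ℝ) (hH : H = fun ω => max (k (X ω) (Z ω) (U ω)) 0)
    (g : (Fin dx → ℝ) → (Fin de → ℝ) → ℝ)
    (hg : Measurable fun p : (Fin dx → ℝ) × (Fin de → ℝ) => g p.1 p.2)
    (W : Ω → ℝ) (hW : W = fun ω => g (X ω) (E ω))
    (Y : Ω → ℝ) (hY : Y = fun ω => if 0 < H ω then W ω * H ω else 0) :
    ∀ y : ℝ, 0 ≤ y →
      μ {ω | Y ω ≤ y} =
        ∫⁻ p : (Fin dx → ℝ) × (Fin dz → ℝ) × ℝ,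
          (Set.indicator {q : (Fin dx → ℝ) × (Fin dz → ℝ) × ℝ | 0 < k q.1 q.2.1 q.2.2}
              (fun q => (Measure.map (fun e => g q.1 e) (condDistrib E U μ q.2.2))
                (Set.Iic (y / k q.1 q.2.1 q.2.2))) p
            + Set.indicator {q : (Fin dx → ℝ) × (Fin dz → ℝ) × ℝ | k q.1 q.2.1 q.2.2 ≤ 0}
              1 p)
          ∂(μ.map fun ω => (X ω, Z ω, U ω)) :=
  earnings_distribution_representation_general μ X Z E U hX hZ hE hU hindep k hk H hH g hg W hW Y hY
end
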